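/- For pairwise distinct positive reals β₁, β₂, β₃, with h₃ the third iterated exponential convolution kernel, ∫₀^∞ h₃(t)² dt = (β₁+β₂+β₃)/(2 β₁ β₂ β₃ (β₁+β₂)(β₁+β₃)(β₂+β₃)). -/

import Mathlib

open MeasureTheory Real

lemma int_exp_aux (a : ℝ) (ha : 0 < a) :
    ∫ t in Set.Ioi (0:ℝ), Real.exp (-a * t) = 1 / a := by
  have h : ∀ t : ℝ, Real.exp (-a * t) = (fun x => Real.exp (-x)) (a * t) := by
    intro t; simp [neg_mul]
  simp_rw [h]
  rw [MeasureTheory.integral_comp_mul_left_Ioi (fun x => Real.exp (-x)) 0 ha]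
  simp [integral_exp_neg_Ioi, integral_exp_Iic_zero, one_div]

lemma integrable_exp_aux (c a : ℝ) (ha : 0 < a) :
    Integrable (fun t => c * Real.exp (-a * t)) (volume.restrict (Set.Ioi (0:ℝ))) := by
  have : IntegrableOn (fun t => Real.exp (-a * t)) (Set.Ioi (0:ℝ)) := by
    simpa [neg_mul] using exp_neg_integrableOn_Ioi 0 ha
  exact this.const_mul c

set_option maxHeartbeats 1000000 in
theorem h3_sq_integral (β₁ β₂ β₃ : ℝ) (hβ₁ : 0 < β₁) (hβ₂ : 0 < β₂)
    (hβ₃ : 0 < β₃) (h12 : β₁ ≠ β₂) (h13 : β₁ ≠ β₃) (h23 : β₂ ≠ β₃) :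
    ∫ t in Set.Ioi (0:ℝ),
        (Real.exp (-β₁ * t) / ((β₁ - β₂) * (β₁ - β₃))
          + Real.exp (-β₂ * t) / ((β₂ - β₃) * (β₂ - β₁))
          + Real.exp (-β₃ * t) / ((β₃ - β₁) * (β₃ - β₂)))^2
      = (β₁ + β₂ + β₃)
          / (2 * β₁ * β₂ * β₃ * (β₁ + β₂) * (β₁ + β₃) * (β₂ + β₃)) := by
  have key : ∀ t : ℝ,
      (Real.exp (-β₁ * t) / ((β₁ - β₂) * (β₁ - β₃))
          + Real.exp (-β₂ * t) / ((β₂ - β₃) * (β₂ - β₁))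
          + Real.exp (-β₃ * t) / ((β₃ - β₁) * (β₃ - β₂)))^2
      = ((β₁ - β₂) * (β₁ - β₃))⁻¹^2 * Real.exp (-(β₁+β₁) * t)
        + ((β₂ - β₃) * (β₂ - β₁))⁻¹^2 * Real.exp (-(β₂+β₂) * t)
        + ((β₃ - β₁) * (β₃ - β₂))⁻¹^2 * Real.exp (-(β₃+β₃) * t)
        + 2*((β₁ - β₂) * (β₁ - β₃))⁻¹*((β₂ - β₃) * (β₂ - β₁))⁻¹ * Real.exp (-(β₁+β₂) * t)
        + 2*((β₁ - β₂) * (β₁ - β₃))⁻¹*((β₃ - β₁) * (β₃ - β₂))⁻¹ * Real.exp (-(β₁+β₃) * t)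
        + 2*((β₂ - β₃) * (β₂ - β₁))⁻¹*((β₃ - β₁) * (β₃ - β₂))⁻¹ * Real.exp (-(β₂+β₃) * t) := by
    intro t
    have e : ∀ a b : ℝ, Real.exp (-(a+b) * t) = Real.exp (-a * t) * Real.exp (-b * t) := by
      intro a b; rw [← Real.exp_add]; ring_nf
    rw [e β₁ β₁, e β₂ β₂, e β₃ β₃, e β₁ β₂, e β₁ β₃, e β₂ β₃]
    simp only [div_eq_mul_inv]
    ring
  simp_rw [key]
  have p11 : (0:ℝ) < β₁+β₁ := by linarith
  have p22 : (0:ℝ) < β₂+β₂ := by linarith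
  have p33 : (0:ℝ) < β₃+β₃ := by linarith
  have p12 : (0:ℝ) < β₁+β₂ := by linarith
  have p13 : (0:ℝ) < β₁+β₃ := by linarith
  have p23 : (0:ℝ) < β₂+β₃ := by linarith
  have i11 := integrable_exp_aux (((β₁ - β₂) * (β₁ - β₃))⁻¹^2) _ p11
  have i22 := integrable_exp_aux (((β₂ - β₃) * (β₂ - β₁))⁻¹^2) _ p22
  have i33 := integrable_exp_aux (((β₃ - β₁) * (β₃ - β₂))⁻¹^2) _ p33
  have i12 := integrable_exp_aux (2*((β₁ - β₂) * (β₁ - β₃))⁻¹*((β₂ - β₃) * (β₂ - β₁))⁻¹) _ p12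
  have i13 := integrable_exp_aux (2*((β₁ - β₂) * (β₁ - β₃))⁻¹*((β₃ - β₁) * (β₃ - β₂))⁻¹) _ p13
  have i23 := integrable_exp_aux (2*((β₂ - β₃) * (β₂ - β₁))⁻¹*((β₃ - β₁) * (β₃ - β₂))⁻¹) _ p23
  set A := fun t : ℝ => ((β₁ - β₂) * (β₁ - β₃))⁻¹^2 * Real.exp (-(β₁+β₁) * t) with hA
  set B := fun t : ℝ => ((β₂ - β₃) * (β₂ - β₁))⁻¹^2 * Real.exp (-(β₂+β₂) * t) with hB
  set C := fun t : ℝ => ((β₃ - β₁) * (β₃ - β₂))⁻¹^2 * Real.exp (-(β₃+β₃) * t) with hC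
  set D := fun t : ℝ => 2*((β₁ - β₂) * (β₁ - β₃))⁻¹*((β₂ - β₃) * (β₂ - β₁))⁻¹ * Real.exp (-(β₁+β₂) * t) with hD
  set E := fun t : ℝ => 2*((β₁ - β₂) * (β₁ - β₃))⁻¹*((β₃ - β₁) * (β₃ - β₂))⁻¹ * Real.exp (-(β₁+β₃) * t) with hE
  set F := fun t : ℝ => 2*((β₂ - β₃) * (β₂ - β₁))⁻¹*((β₃ - β₁) * (β₃ - β₂))⁻¹ * Real.exp (-(β₂+β₃) * t) with hF
  have iAB : Integrable (fun t => A t + B t) (volume.restrict (Set.Ioi (0:ℝ))) := i11.add i22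
  have iABC : Integrable (fun t => A t + B t + C t) (volume.restrict (Set.Ioi (0:ℝ))) := iAB.add i33
  have iABCD : Integrable (fun t => A t + B t + C t + D t) (volume.restrict (Set.Ioi (0:ℝ))) := iABC.add i12
  have iABCDE : Integrable (fun t => A t + B t + C t + D t + E t) (volume.restrict (Set.Ioi (0:ℝ))) := iABCD.add i13
  rw [show (∫ t in Set.Ioi (0:ℝ), (A t + B t + C t + D t + E t + F t))
      = (∫ t in Set.Ioi (0:ℝ), A t) + (∫ t in Set.Ioi (0:ℝ), B t) + (∫ t in Set.Ioi (0:ℝ), C t)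
        + (∫ t in Set.Ioi (0:ℝ), D t) + (∫ t in Set.Ioi (0:ℝ), E t) + (∫ t in Set.Ioi (0:ℝ), F t) by
    rw [integral_add iABCDE i23, integral_add iABCD i13, integral_add iABC i12,
      integral_add iAB i33, integral_add i11 i22]]
  rw [hA, hB, hC, hD, hE, hF]
  simp_rw [integral_const_mul, int_exp_aux _ p11, int_exp_aux _ p22, int_exp_aux _ p33,
    int_exp_aux _ p12, int_exp_aux _ p13, int_exp_aux _ p23]
  have d12 : β₁ - β₂ ≠ 0 := sub_ne_zero.mpr h12
  have d13 : β₁ - β₃ ≠ 0 := sub_ne_zero.mpr h13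
  have d23 : β₂ - β₃ ≠ 0 := sub_ne_zero.mpr h23
  have d21 : β₂ - β₁ ≠ 0 := sub_ne_zero.mpr (Ne.symm h12)
  have d31 : β₃ - β₁ ≠ 0 := sub_ne_zero.mpr (Ne.symm h13)
  have d32 : β₃ - β₂ ≠ 0 := sub_ne_zero.mpr (Ne.symm h23)
  field_simp
  ring
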